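/- arXiv:2007.14890 — 2 statements merged into one kernel-verified Lean document; each statement's English description precedes it below -/
import Mathlib

section
/- Let S be an inverse semigroup with zero, s ∈ S, and e, f idempotents of S with f ≤ e and f dense in e. Then s⁻¹·f·s ≤ s⁻¹·e·s and s⁻¹·f·s is dense in s⁻¹·e·s. (This is the invariance claim for core representations underlying Proposition 4.7.) -/
/-! Conjugation `x ↦ s⁻¹ * x * s` turns a product `f * x` with `f` idempotent into the product of
the conjugates, because `f` commutes with `s * s⁻¹`; applied to `f = f * e` this gives the order
relation. For density, a nonzero idempotent `d ≤ s⁻¹ * e * s` with `d * (s⁻¹ * f * s) = 0` is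
carried by the reverse conjugation to `s * d * s⁻¹`, a nonzero idempotent below `e` annihilating
`f`; it is nonzero because conjugating it back by `s` returns `d`. -/

/-- An inverse semigroup with zero: a semigroup with an absorbing element `0` and an
inverse operation satisfying `s * s⁻¹ * s = s` and `s⁻¹ * s * s⁻¹ = s⁻¹`, in which any two
idempotents commute. -/
class InverseSemigroupWithZero (S : Type*) extends Semigroup S, Zero S, Inv S where
  zero_mul : ∀ s : S, 0 * s = 0
  mul_zero : ∀ s : S, s * 0 = 0
  mul_inv_mul : ∀ s : S, s * s⁻¹ * s = s
  inv_mul_inv : ∀ s : S, s⁻¹ * s * s⁻¹ = s⁻¹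
  idem_comm : ∀ e f : S, e * e = e → f * f = f → e * f = f * e

namespace InverseSemigroupWithZero

variable {S : Type*} [InverseSemigroupWithZero S]

theorem mul_inv_self_idem (s : S) : s * s⁻¹ * (s * s⁻¹) = s * s⁻¹ := by
  rw [← mul_assoc, mul_inv_mul]

theorem inv_mul_self_idem (s : S) : s⁻¹ * s * (s⁻¹ * s) = s⁻¹ * s := by
  rw [← mul_assoc, inv_mul_inv]

/-- `f` commutes with `s * s⁻¹`, which `s⁻¹` absorbs on the left. -/
theorem inv_mul_mul_mul_inv_self {f : S} (hf : f * f = f) (s : S) :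
    s⁻¹ * f * (s * s⁻¹) = s⁻¹ * f := by
  rw [mul_assoc, idem_comm f _ hf (mul_inv_self_idem s), ← mul_assoc, ← mul_assoc, inv_mul_inv]

theorem conj_mul_conj {f : S} (hf : f * f = f) (s x : S) :
    s⁻¹ * f * s * (s⁻¹ * x * s) = s⁻¹ * (f * x) * s := by
  calc s⁻¹ * f * s * (s⁻¹ * x * s) = s⁻¹ * f * (s * s⁻¹) * x * s := by simp only [mul_assoc]
    _ = s⁻¹ * (f * x) * s := by rw [inv_mul_mul_mul_inv_self hf, mul_assoc s⁻¹]

theorem mul_conj_mul_inv {f : S} (hf : f * f = f) (s d : S) :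
    s * (d * (s⁻¹ * f * s)) * s⁻¹ = s * d * s⁻¹ * f := by
  calc s * (d * (s⁻¹ * f * s)) * s⁻¹ = s * (d * (s⁻¹ * f * (s * s⁻¹))) := by
        simp only [mul_assoc]
    _ = s * d * s⁻¹ * f := by rw [inv_mul_mul_mul_inv_self hf]; simp only [mul_assoc]

theorem mul_inv_mul_self_of_eq_mul_conj {d : S} (s x : S) (h : d = d * (s⁻¹ * x * s)) :
    d * (s⁻¹ * s) = d := by
  calc d * (s⁻¹ * s) = d * (s⁻¹ * x * (s * s⁻¹ * s)) := by
        nth_rewrite 1 [h]; simp only [mul_assoc]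
    _ = d := by rw [mul_inv_mul, ← h]

theorem conj_conj_inv {d : S} (hd : d * d = d) {s : S} (hds : d * (s⁻¹ * s) = d) :
    s⁻¹ * (s * d * s⁻¹) * s = d := by
  calc s⁻¹ * (s * d * s⁻¹) * s = s⁻¹ * s * d * (s⁻¹ * s) := by simp only [mul_assoc]
    _ = d := by rw [idem_comm _ d (inv_mul_self_idem s) hd, hds, hds]

theorem conj_inv_idem {d : S} (hd : d * d = d) {s : S} (hds : d * (s⁻¹ * s) = d) :
    s * d * s⁻¹ * (s * d * s⁻¹) = s * d * s⁻¹ := by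
  calc s * d * s⁻¹ * (s * d * s⁻¹) = s * (d * (s⁻¹ * s) * d) * s⁻¹ := by simp only [mul_assoc]
    _ = s * d * s⁻¹ := by rw [hds, hd]

end InverseSemigroupWithZero

open InverseSemigroupWithZero

/-- invariance claim for core representations.  If `e`, `f` are
idempotents with `f ≤ e` and `f` dense in `e`, then `s⁻¹·f·s ≤ s⁻¹·e·s` and `s⁻¹·f·s` is
dense in `s⁻¹·e·s`. -/
theorem statement11 {S : Type*} [InverseSemigroupWithZero S]
    (s e f : S) (he : e * e = e) (hf : f * f = f)
    (hle : f = f * e)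
    (hdense : ∀ d : S, d * d = d → d = d * e → d ≠ 0 → d * f ≠ 0) :
    (s⁻¹ * f * s = (s⁻¹ * f * s) * (s⁻¹ * e * s)) ∧
    ∀ d : S, d * d = d → d = d * (s⁻¹ * e * s) → d ≠ 0 → d * (s⁻¹ * f * s) ≠ 0 := by
  refine ⟨by rw [conj_mul_conj hf, ← hle], ?_⟩
  intro d hd hde hd0 hdf
  have hds : d * (s⁻¹ * s) = d := mul_inv_mul_self_of_eq_mul_conj s e hde
  set c := s * d * s⁻¹ with hc
  have hce : c = c * e := by
    calc c = s * (d * (s⁻¹ * e * s)) * s⁻¹ := by rw [← hde]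
      _ = c * e := mul_conj_mul_inv he s d
  have hc0 : c ≠ 0 := fun h0 => hd0 <| by
    rw [← conj_conj_inv hd hds, ← hc, h0, InverseSemigroupWithZero.mul_zero,
      InverseSemigroupWithZero.zero_mul]
  refine hdense c (conj_inv_idem hd hds) hce hc0 ?_
  rw [← mul_conj_mul_inv hf, hdf, InverseSemigroupWithZero.mul_zero,
    InverseSemigroupWithZero.zero_mul]
end

section
/- Let S be an inverse semigroup with zero and let X ⊆ E(S) × Finset E(S) be S-invariant, meaning that whenever (e, F) ∈ X and s ∈ S, the pair (s⁻¹·e·s, {s⁻¹·f·s : f ∈ F}) also belongs to X. If φ : E(S) → Bool is an X-to-join character of E(S) and s ∈ S satisfies φ(s⁻¹·s) = true, then the map s·φ : E(S) → Bool defined by (s·φ)(e) = φ(s⁻¹·e·s) is again an X-to-join character of E(S). (The invariance part of Lemma 3.11: \hat{E(S)}_X is invariant under the natural action of S.) -/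
namespace InverseSemigroupWithZero

variable {S : Type*} [InverseSemigroupWithZero S]

/-- The semilattice `E(S)` of idempotents of `S`. -/
def IdemE (S : Type*) [InverseSemigroupWithZero S] : Type _ :=
  {e : S // e * e = e}

theorem zero_idem : (0 : S) * 0 = 0 := mul_zero 0

theorem mul_idem {e f : S} (he : e * e = e) (hf : f * f = f) :
    (e * f) * (e * f) = e * f := by
  have hc : e * f = f * e := idem_comm e f he hf
  calc (e * f) * (e * f) = e * ((f * e) * f) := by rw [mul_assoc, ← mul_assoc f e f]
    _ = e * ((e * f) * f) := by rw [← hc]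
    _ = e * e * (f * f) := by rw [mul_assoc e f f, ← mul_assoc]
    _ = e * f := by rw [he, hf]

theorem rr_idem (s : S) : (s * s⁻¹) * (s * s⁻¹) = s * s⁻¹ := by
  rw [mul_assoc, ← mul_assoc s⁻¹ s s⁻¹, inv_mul_inv]

theorem dd_idem (s : S) : (s⁻¹ * s) * (s⁻¹ * s) = s⁻¹ * s := by
  rw [mul_assoc, ← mul_assoc s s⁻¹ s, mul_inv_mul]

theorem conj_idem (s : S) {e : S} (he : e * e = e) :
    (s⁻¹ * e * s) * (s⁻¹ * e * s) = s⁻¹ * e * s := by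
  have hc : e * (s * s⁻¹) = (s * s⁻¹) * e := idem_comm e (s * s⁻¹) he (rr_idem s)
  have key : e * (s * (s⁻¹ * (e * s))) = e * s := by
    rw [← mul_assoc s s⁻¹ (e * s), ← mul_assoc (s * s⁻¹) e s, ← hc,
      mul_assoc e (s * s⁻¹) s, mul_inv_mul, ← mul_assoc e e s, he]
  calc (s⁻¹ * e * s) * (s⁻¹ * e * s) = s⁻¹ * (e * (s * (s⁻¹ * (e * s)))) := by
        simp only [mul_assoc]
    _ = s⁻¹ * (e * s) := by rw [key]
    _ = s⁻¹ * e * s := by rw [← mul_assoc]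

/-- The meet `e ⊓ f = e·f` in `E(S)`. -/
def emul (e f : IdemE S) : IdemE S := ⟨e.1 * f.1, mul_idem e.2 f.2⟩

/-- The bottom element `0` of `E(S)`. -/
def ezero : IdemE S := ⟨0, zero_idem⟩

/-- Conjugation `e ↦ s⁻¹·e·s` on `E(S)`. -/
def econj (s : S) (e : IdemE S) : IdemE S := ⟨s⁻¹ * e.1 * s, conj_idem s e.2⟩

/-- A character of `E(S)`: a map `E(S) → Bool` sending `0` to `false`, preserving the
meet (= multiplication), and not identically false. -/
def IsChar (φ : IdemE S → Bool) : Prop :=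
  φ ezero = false ∧ (∀ e f : IdemE S, φ (emul e f) = (φ e && φ f)) ∧
    ∃ e : IdemE S, φ e = true

instance [DecidableEq S] : DecidableEq (IdemE S) :=
  inferInstanceAs (DecidableEq {e : S // e * e = e})

/-- A character of `E(S)` is `X`-to-join if for every `(e, F) ∈ X`, `φ e = true` iff
`φ f = true` for some `f ∈ F`. -/
def IsXtoJoinChar (X : Set (IdemE S × Finset (IdemE S))) (φ : IdemE S → Bool) : Prop :=
  IsChar φ ∧ ∀ p ∈ X, (φ p.1 = true ↔ ∃ f ∈ p.2, φ f = true)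

/-! Conjugation `e ↦ s⁻¹ * e * s` preserves the meet of `E(S)` because `s * s⁻¹` commutes with
every idempotent, and it sends `s * s⁻¹` to `s⁻¹ * s`; so `s · φ` is a character once
`φ (s⁻¹ * s) = true`. The join condition of `s · φ` at `(e, F)` is that of `φ` at the conjugated
pair, which lies in `X` by invariance. -/

theorem conj_mul (s : S) {e : S} (he : e * e = e) (f : S) :
    s⁻¹ * (e * f) * s = (s⁻¹ * e * s) * (s⁻¹ * f * s) := by
  have hc : e * (s * s⁻¹) = (s * s⁻¹) * e := idem_comm _ _ he (rr_idem s)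
  calc s⁻¹ * (e * f) * s
      = (s⁻¹ * s * s⁻¹) * (e * f) * s := by rw [inv_mul_inv]
    _ = s⁻¹ * ((s * s⁻¹) * e) * (f * s) := by simp only [mul_assoc]
    _ = s⁻¹ * (e * (s * s⁻¹)) * (f * s) := by rw [← hc]
    _ = (s⁻¹ * e * s) * (s⁻¹ * f * s) := by simp only [mul_assoc]

theorem econj_emul (s : S) (e f : IdemE S) :
    econj s (emul e f) = emul (econj s e) (econj s f) :=
  Subtype.ext (conj_mul s e.2 f.1)

theorem econj_ezero (s : S) : econj s (ezero : IdemE S) = ezero :=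
  Subtype.ext (show s⁻¹ * 0 * s = 0 by rw [mul_zero, zero_mul])

theorem econj_mul_inv (s : S) :
    econj s (⟨s * s⁻¹, rr_idem s⟩ : IdemE S) = ⟨s⁻¹ * s, dd_idem s⟩ :=
  Subtype.ext (show s⁻¹ * (s * s⁻¹) * s = s⁻¹ * s by rw [← mul_assoc, inv_mul_inv])

theorem IsChar.comp_econj {φ : IdemE S → Bool} (hφ : IsChar φ) {s : S}
    (hs : φ ⟨s⁻¹ * s, dd_idem s⟩ = true) : IsChar fun e => φ (econj s e) := by
  obtain ⟨hzero, hmul, -⟩ := hφ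
  exact ⟨(congrArg φ (econj_ezero s)).trans hzero,
    fun e f => (congrArg φ (econj_emul s e f)).trans (hmul _ _),
    ⟨s * s⁻¹, rr_idem s⟩, (congrArg φ (econj_mul_inv s)).trans hs⟩

/-- invariance part of Lemma 3.11.  Let `X` be an `S`-invariant subset
of `E(S) × 𝒫_fin(E(S))`.  If `φ` is an `X`-to-join character of `E(S)` and
`φ (s⁻¹·s) = true`, then `s·φ : e ↦ φ (s⁻¹·e·s)` is again an `X`-to-join character. -/
theorem statement14 [DecidableEq S] (X : Set (IdemE S × Finset (IdemE S)))
    (hXinv : ∀ p ∈ X, ∀ s : S, (econj s p.1, p.2.image (econj s)) ∈ X)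
    (φ : IdemE S → Bool) (hφ : IsXtoJoinChar X φ)
    (s : S) (hs : φ ⟨s⁻¹ * s, dd_idem s⟩ = true) :
    IsXtoJoinChar X fun e : IdemE S => φ (econj s e) := by
  obtain ⟨hchar, hjoin⟩ := hφ
  refine ⟨hchar.comp_econj hs, fun p hp => ?_⟩
  rw [hjoin _ (hXinv p hp s), Finset.exists_mem_image]

end InverseSemigroupWithZero
end
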